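/- Let p be an odd prime and G a finite p-group such that every maximal subgroup of G is powerful. Then G^p is powerful. -/

import Mathlib

/-- A finite `p`-group (`p` odd) is powerful if `[G,G] ≤ G^p`. -/
def IsPowerfulOdd (p : ℕ) (G : Type*) [Group G] : Prop :=
  commutator G ≤ Subgroup.closure {x : G | ∃ g : G, g ^ p = x}

/-!
Write `P = G^p` and `P₂ = P^p`. As `P₂` is normal, it suffices that the generators `g^p` of `P`
commute modulo `P₂`. If `g` generates `G` this is trivial; otherwise `g` lies in a subgroup `M`
of index `p`, which is normal and powerful, so `h^p ∈ M` and
`⁅g^p, h^p⁆ ∈ ⁅M^p, M⁆ ≤ (M^p)^p ≤ P₂`.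

The inclusion `⁅K^p, K⁆ ≤ (K^p)^p` for a powerful `p`-group `K` is proved in `Q = K/(K^p)^p`,
where it says that `Q^p` is central. By induction on the order (dividing out the centre),
`⁅Q^p, Q⁆` is central. Then for `a = ⁅g⁻¹, m⁆ ∈ Q' ≤ Q^p` we have `a^p = 1`, the commutator
`z = ⁅a⁻¹, g⁻¹⁆` is central, and `(m g m⁻¹)^p = (g a)^p = g^p a^p z^(p choose 2) = g^p`
since `p ∣ p choose 2` for odd `p`.
-/

open Subgroup
open scoped commutatorElement

namespace Subgroup

variable {G H : Type*} [Group G] [Group H]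

/-- `(⊤ : Subgroup G).powClosure p` is `G^p`; `(M.powClosure p).powClosure p` is `(M^p)^p`. -/
def powClosure (K : Subgroup G) (n : ℕ) : Subgroup G :=
  closure {x | ∃ y ∈ K, y ^ n = x}

variable {K L : Subgroup G} {n : ℕ}

lemma top_powClosure (n : ℕ) :
    (⊤ : Subgroup G).powClosure n = closure {x | ∃ g : G, g ^ n = x} := by
  simp [powClosure]

lemma pow_mem_powClosure {y : G} (hy : y ∈ K) (n : ℕ) : y ^ n ∈ K.powClosure n :=
  subset_closure ⟨y, hy, rfl⟩

lemma powClosure_mono (h : K ≤ L) : K.powClosure n ≤ L.powClosure n :=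
  closure_mono fun _ ⟨y, hy, hx⟩ ↦ ⟨y, h hy, hx⟩

lemma map_powClosure (f : G →* H) (K : Subgroup G) (n : ℕ) :
    (K.powClosure n).map f = (K.map f).powClosure n := by
  rw [powClosure, powClosure, MonoidHom.map_closure]
  congr 1
  ext x
  simp [map_pow]

instance powClosure_characteristic [K.Characteristic] : (K.powClosure n).Characteristic :=
  characteristic_iff_map_le.mpr fun ϕ ↦ by
    rw [map_powClosure, characteristic_iff_map_eq.mp ‹_› ϕ]

lemma commutator_le_iff_map_le_centralizer {K₁ K₂ N : Subgroup G} [N.Normal] :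
    ⁅K₁, K₂⁆ ≤ N ↔
      K₁.map (QuotientGroup.mk' N) ≤ centralizer (K₂.map (QuotientGroup.mk' N)) := by
  rw [← commutator_eq_bot_iff_le_centralizer, ← map_commutator, map_eq_bot_iff,
    QuotientGroup.ker_mk']

lemma commutator_top_le_iff_map_le_center {N : Subgroup G} [N.Normal] :
    ⁅K, ⊤⁆ ≤ N ↔ K.map (QuotientGroup.mk' N) ≤ center (G ⧸ N) := by
  rw [commutator_le_iff_map_le_centralizer,
    map_top_of_surjective _ (QuotientGroup.mk'_surjective N), coe_top, centralizer_univ]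

lemma commutator_closure_le {S T : Set G} {N : Subgroup G} [N.Normal]
    (h : ∀ s ∈ S, ∀ t ∈ T, ⁅s, t⁆ ∈ N) : ⁅closure S, closure T⁆ ≤ N := by
  rw [commutator_le_iff_map_le_centralizer, MonoidHom.map_closure, MonoidHom.map_closure,
    centralizer_closure, closure_le]
  rintro _ ⟨s, hs, rfl⟩ _ ⟨t, ht, rfl⟩
  have := h s hs t ht
  rw [← QuotientGroup.ker_mk' N, MonoidHom.mem_ker, map_commutatorElement,
    commutatorElement_eq_one_iff_commute] at this
  exact this.symm

end Subgroup

section Powerful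

variable {G H : Type*} [Group G] [Group H] {p : ℕ}

lemma isPowerfulOdd_iff :
    IsPowerfulOdd p G ↔ commutator G ≤ (⊤ : Subgroup G).powClosure p := by
  rw [top_powClosure]
  rfl

lemma isPowerfulOdd_subgroup_iff (K : Subgroup G) :
    IsPowerfulOdd p K ↔ ⁅K, K⁆ ≤ K.powClosure p := by
  rw [isPowerfulOdd_iff, ← map_le_map_iff_of_injective K.subtype_injective,
    map_subtype_commutator, map_powClosure, ← MonoidHom.range_eq_map, range_subtype]

lemma IsPowerfulOdd.of_surjective {f : G →* H} (hf : Function.Surjective f)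
    (hG : IsPowerfulOdd p G) : IsPowerfulOdd p H := by
  rw [isPowerfulOdd_iff] at hG ⊢
  calc commutator H = (commutator G).map f := by
        rw [commutator_def, commutator_def, map_commutator, map_top_of_surjective f hf]
    _ ≤ ((⊤ : Subgroup G).powClosure p).map f := map_mono hG
    _ = (⊤ : Subgroup H).powClosure p := by rw [map_powClosure, map_top_of_surjective f hf]

end Powerful

namespace IsPGroup

variable {G : Type*} [Group G] [Finite G] {p : ℕ}

lemma normal_of_index_eq (hp : p.Prime) (hG : IsPGroup p G) {M : Subgroup G}
    (hM : M.index = p) : M.Normal := by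
  have := Fact.mk hp
  obtain ⟨n, hn⟩ := hG.exists_card_eq
  have hn0 : n ≠ 0 := by
    rintro rfl
    rw [pow_zero, ← M.index_mul_card, hM] at hn
    exact hp.one_lt.ne' (Nat.eq_one_of_mul_eq_one_right hn)
  exact normal_of_index_eq_minFac_card (by rw [hn, hp.pow_minFac hn0, hM])

lemma exists_le_index_eq (hp : p.Prime) (hG : IsPGroup p G) {K : Subgroup G} (hK : K ≠ ⊤) :
    ∃ M : Subgroup G, K ≤ M ∧ M.index = p := by
  have := Fact.mk hp
  obtain ⟨n, hn⟩ := hG.exists_card_eq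
  obtain ⟨k, hk⟩ := (hG.to_subgroup K).exists_card_eq
  have hkn : k < n := by
    have hdvd : p ^ k ∣ p ^ n := hk ▸ hn ▸ K.card_subgroup_dvd_card
    refine lt_of_le_of_ne ((Nat.pow_dvd_pow_iff_le_right hp.one_lt).mp hdvd) fun hkn ↦ hK ?_
    rw [← card_eq_iff_eq_top, hk, hn, hkn]
  obtain ⟨m, rfl⟩ : ∃ m, n = m + 1 := ⟨n - 1, by omega⟩
  obtain ⟨M, hM, hKM⟩ := Sylow.exists_subgroup_card_pow_prime_le p
    (hn ▸ pow_dvd_pow p m.le_succ) K hk (Nat.le_of_lt_succ hkn)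
  refine ⟨M, hKM, Nat.eq_of_mul_eq_mul_right (pow_pos hp.pos m) ?_⟩
  rw [← hM, M.index_mul_card, hn, pow_succ', hM]

lemma card_quotient_center_lt [Fact p.Prime] [Nontrivial G] (hG : IsPGroup p G) :
    Nat.card (G ⧸ center G) < Nat.card G := by
  rw [(center G).card_eq_card_quotient_mul_card_subgroup]
  exact lt_mul_of_one_lt_right Nat.card_pos
    ((one_lt_card_iff_ne_bot _).mpr hG.bot_lt_center.ne')

end IsPGroup

lemma Odd.dvd_choose_two {n : ℕ} (hn : Odd n) : n ∣ n.choose 2 := by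
  obtain ⟨k, rfl⟩ := hn
  refine ⟨k, ?_⟩
  rw [Nat.choose_two_right, Nat.add_sub_cancel,
    show (2 * k + 1) * (2 * k) = (2 * k + 1) * k * 2 by ring, Nat.mul_div_cancel _ two_pos]

section CentralCommutator

variable {Q : Type*} [Group Q] {g a z : Q}

lemma inv_mul_pow_mul_of_conj_eq (hz : z ∈ center Q) (h : g⁻¹ * a * g = a * z) (k : ℕ) :
    g⁻¹ * a ^ k * g = a ^ k * z ^ k := by
  have hcomm : Commute a z := mem_center_iff.mp hz a
  simpa [h, hcomm.mul_pow] using (conj_pow (a := g⁻¹) (b := a) (i := k)).symm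

lemma mul_pow_of_conj_eq (hz : z ∈ center Q) (h : g⁻¹ * a * g = a * z) (k : ℕ) :
    (g * a) ^ k = g ^ k * a ^ k * z ^ k.choose 2 := by
  have hzc (j : ℕ) (y : Q) : y * z ^ j = z ^ j * y := mem_center_iff.mp (pow_mem hz j) y
  induction k with
  | zero => simp
  | succ k ih =>
    have hak : a ^ k * g = g * a ^ k * z ^ k := by
      rw [mul_assoc, ← inv_mul_pow_mul_of_conj_eq hz h k]; group
    calc (g * a) ^ (k + 1) = g ^ k * a ^ k * (z ^ k.choose 2 * (g * a)) := by
          rw [pow_succ, ih, mul_assoc]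
      _ = g ^ k * (a ^ k * g) * a * z ^ k.choose 2 := by rw [← hzc]; group
      _ = g ^ k * g * a ^ k * (z ^ k * a) * z ^ k.choose 2 := by rw [hak]; group
      _ = g ^ (k + 1) * a ^ (k + 1) * z ^ (k + 1).choose 2 := by
          rw [← hzc, Nat.choose_succ_succ, Nat.choose_one_right, pow_add]; group

lemma powClosure_top_le_center_of_commutator_le_center {n : ℕ} (hn : Odd n)
    (hcomm : commutator Q ≤ (⊤ : Subgroup Q).powClosure n)
    (hbot : ((⊤ : Subgroup Q).powClosure n).powClosure n = ⊥)
    (hcent : ⁅(⊤ : Subgroup Q).powClosure n, ⊤⁆ ≤ center Q) :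
    (⊤ : Subgroup Q).powClosure n ≤ center Q := by
  rw [top_powClosure, closure_le]
  rintro _ ⟨g, rfl⟩
  rw [SetLike.mem_coe, mem_center_iff]
  intro m
  set a := ⁅g⁻¹, m⁆
  have ha : a ∈ (⊤ : Subgroup Q).powClosure n :=
    hcomm (commutator_mem_commutator (mem_top _) (mem_top _))
  have han : a ^ n = 1 := by
    simpa only [hbot, mem_bot] using pow_mem_powClosure ha n
  set z := ⁅a⁻¹, g⁻¹⁆
  have hz : z ∈ center Q := hcent (commutator_mem_commutator (inv_mem ha) (mem_top _))
  have hconj : g⁻¹ * a * g = a * z := by simp only [z, commutatorElement_def]; group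
  have hzn : z ^ n = 1 := by
    simpa [han] using (inv_mul_pow_mul_of_conj_eq hz hconj n).symm
  have hzC : z ^ n.choose 2 = 1 := by
    obtain ⟨c, hc⟩ := hn.dvd_choose_two
    rw [hc, pow_mul, hzn, one_pow]
  have hga : g * a = m * g * m⁻¹ := by simp only [a, commutatorElement_def]; group
  refine mul_inv_eq_iff_eq_mul.mp ?_
  rw [← conj_pow, ← hga, mul_pow_of_conj_eq hz hconj, han, hzC, mul_one, mul_one]

end CentralCommutator

theorem IsPowerfulOdd.powClosure_top_le_center {p : ℕ} (hp : p.Prime) (hodd : Odd p)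
    {Q : Type*} [Group Q] [Finite Q] (hQ : IsPGroup p Q) (hpow : IsPowerfulOdd p Q)
    (hbot : ((⊤ : Subgroup Q).powClosure p).powClosure p = ⊥) :
    (⊤ : Subgroup Q).powClosure p ≤ center Q := by
  have := Fact.mk hp
  induction hcard : Nat.card Q using Nat.strong_induction_on generalizing Q with
  | _ n ih =>
  rcases subsingleton_or_nontrivial Q with hQ1 | hQ1
  · simp [Subsingleton.elim ((⊤ : Subgroup Q).powClosure p) ⊥]
  refine powClosure_top_le_center_of_commutator_le_center hodd
    (isPowerfulOdd_iff.mp hpow) hbot ?_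
  have hf := QuotientGroup.mk'_surjective (center Q)
  rw [commutator_top_le_iff_map_le_center, map_powClosure, map_top_of_surjective _ hf]
  refine ih _ (hcard ▸ hQ.card_quotient_center_lt) (hQ.to_quotient _) (hpow.of_surjective hf)
    ?_ rfl
  rw [← map_top_of_surjective _ hf, ← map_powClosure, ← map_powClosure, hbot,
    Subgroup.map_bot]

theorem IsPowerfulOdd.commutator_powClosure_top_le {p : ℕ} (hp : p.Prime) (hodd : Odd p)
    {K : Type*} [Group K] [Finite K] (hK : IsPGroup p K) (hpow : IsPowerfulOdd p K) :
    ⁅(⊤ : Subgroup K).powClosure p, ⊤⁆ ≤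
      ((⊤ : Subgroup K).powClosure p).powClosure p := by
  have hf := QuotientGroup.mk'_surjective (((⊤ : Subgroup K).powClosure p).powClosure p)
  rw [commutator_top_le_iff_map_le_center, map_powClosure, map_top_of_surjective _ hf]
  refine (hpow.of_surjective hf).powClosure_top_le_center hp hodd (hK.to_quotient _) ?_
  rw [← map_top_of_surjective _ hf, ← map_powClosure, ← map_powClosure,
    QuotientGroup.map_mk'_self]

theorem IsPowerfulOdd.commutator_powClosure_le {p : ℕ} (hp : p.Prime) (hodd : Odd p)
    {G : Type*} [Group G] {M : Subgroup G} [Finite M] (hM : IsPGroup p M)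
    (hpow : IsPowerfulOdd p M) : ⁅M.powClosure p, M⁆ ≤ (M.powClosure p).powClosure p := by
  have := map_mono (f := M.subtype) (hpow.commutator_powClosure_top_le hp hodd hM)
  rwa [map_commutator, map_powClosure, map_powClosure, map_powClosure, ← MonoidHom.range_eq_map,
    range_subtype] at this

theorem commutator_pow_pow_mem {p : ℕ} (hp : p.Prime) (hodd : Odd p)
    {G : Type*} [Group G] [Finite G] (hG : IsPGroup p G)
    (hM : ∀ M : Subgroup G, M.index = p → IsPowerfulOdd p M) (g h : G) :
    ⁅g ^ p, h ^ p⁆ ∈ ((⊤ : Subgroup G).powClosure p).powClosure p := by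
  by_cases hg : zpowers g = ⊤
  · obtain ⟨k, rfl⟩ := mem_zpowers_iff.mp (hg ▸ mem_top h)
    rw [commutatorElement_eq_one_iff_commute.mpr (((Commute.refl g).zpow_right k).pow_pow p p)]
    exact one_mem _
  obtain ⟨M, hgM, hMp⟩ := hG.exists_le_index_eq hp hg
  have := hG.normal_of_index_eq hp hMp
  have hMpow := (hM M hMp).commutator_powClosure_le hp hodd (hG.to_subgroup M)
  refine powClosure_mono (powClosure_mono le_top) (hMpow (commutator_mem_commutator ?_ ?_))
  · exact pow_mem_powClosure (hgM (mem_zpowers g)) p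
  · exact hMp ▸ M.pow_index_mem h

theorem stmt8 (p : ℕ) (hp : p.Prime) (hodd : Odd p) (G : Type*) [Group G] [Finite G]
    (hG : IsPGroup p G)
    (hM : ∀ M : Subgroup G, M.index = p → IsPowerfulOdd p M) :
    IsPowerfulOdd p (Subgroup.closure {x : G | ∃ g : G, g ^ p = x}) := by
  have hP := top_powClosure (G := G) p
  rw [← hP, isPowerfulOdd_subgroup_iff]
  conv_lhs => rw [hP]
  refine commutator_closure_le ?_
  rintro _ ⟨g, rfl⟩ _ ⟨h, rfl⟩
  exact commutator_pow_pow_mem hp hodd hG hM g h
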